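/- Let G be a finite simple graph, let G × G denote its tensor product with itself, and let t ≥ 1 be an integer. If G contains a biclique with at least t² edges (i.e., a complete bipartite subgraph with parts of sizes n₁, n₂ satisfying n₁·n₂ ≥ t²), then G × G contains a balanced biclique K_{t,t} as a subgraph. Equivalently, if G × G contains no K_{t,t}, then G contains no biclique with t² edges. -/

import Mathlib

/-- The tensor product `G₁ × G₂`: `(a, b)` is adjacent to `(c, d)` iff
`a` is adjacent to `c` in `G₁` and `b` is adjacent to `d` in `G₂`. -/
def tensorProd {V₁ V₂ : Type*} (G₁ : SimpleGraph V₁) (G₂ : SimpleGraph V₂) :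
    SimpleGraph (V₁ × V₂) where
  Adj x y := G₁.Adj x.1 y.1 ∧ G₂.Adj x.2 y.2
  symm := ⟨fun _ _ ⟨h₁, h₂⟩ => ⟨h₁.symm, h₂.symm⟩⟩
  loopless := ⟨fun x ⟨h₁, _⟩ => G₁.loopless.irrefl x.1 h₁⟩

/-- If `G` contains a biclique with at least `t²` edges (parts of sizes `n₁, n₂`
with `n₁ · n₂ ≥ t²`), then the tensor product `G × G` contains a balanced
biclique `K_{t, t}`. -/
theorem tensor_balanced_biclique {V : Type*} [Fintype V] (G : SimpleGraph V)
    (t : ℕ) (ht : 1 ≤ t)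
    (h : ∃ A B : Finset V, Disjoint A B ∧ t ^ 2 ≤ A.card * B.card ∧
      ∀ a ∈ A, ∀ b ∈ B, G.Adj a b) :
    ∃ A' B' : Finset (V × V), Disjoint A' B' ∧ A'.card = t ∧ B'.card = t ∧
      ∀ a ∈ A', ∀ b ∈ B', (tensorProd G G).Adj a b := by
  obtain ⟨A, B, hdisj, hcard, hadj⟩ := h
  have ht2 : t ≤ t ^ 2 := by nlinarith
  have hAB : t ≤ (A ×ˢ B).card := by
    rw [Finset.card_product]; nlinarith [Nat.mul_comm A.card B.card]
  have hBA : t ≤ (B ×ˢ A).card := by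
    rw [Finset.card_product]; nlinarith [Nat.mul_comm A.card B.card]
  obtain ⟨A', hA'sub, hA'card⟩ := Finset.exists_subset_card_eq hAB
  obtain ⟨B', hB'sub, hB'card⟩ := Finset.exists_subset_card_eq hBA
  refine ⟨A', B', ?_, hA'card, hB'card, ?_⟩
  · rw [Finset.disjoint_left]
    intro x hxA hxB
    have h1 := hA'sub hxA
    have h2 := hB'sub hxB
    rw [Finset.mem_product] at h1 h2
    exact Finset.disjoint_left.mp hdisj h1.1 h2.1
  · intro a ha b hb
    have h1 := hA'sub ha
    have h2 := hB'sub hb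
    rw [Finset.mem_product] at h1 h2
    exact ⟨hadj a.1 h1.1 b.1 h2.1, (hadj b.2 h2.2 a.2 h1.2).symm⟩
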